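/- arXiv:1910.01065 — 3 statements merged into one kernel-verified Lean document; each statement's English description precedes it below -/
import Mathlib

section
/- Let δ be an architecture on a finite edge-coloured graph Γ. Then for all vertices x, y, δ(y,x) is the transpose (adjoint with respect to the inner product making the vertex basis orthonormal) of δ(x,y). In particular the Coxeter basis W is closed under transposition. -/
open Matrix

/-- A finite edge-coloured graph: for each colour `i` a symmetric, irreflexive adjacency
relation, with distinct colours giving disjoint edge sets. -/
structure EdgeColouredGraph (I X : Type*) where
  Adj : I → X → X → Prop
  symm : ∀ i x y, Adj i x y → Adj i y x
  loopless : ∀ i x, ¬ Adj i x x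
  colour_unique : ∀ i j x y, Adj i x y → Adj j x y → i = j

open Classical in
/-- The adjacency operator (matrix) of colour `i`. -/
noncomputable def EdgeColouredGraph.adjMatrix {I X : Type*} [Fintype X]
    (G : EdgeColouredGraph I X) (i : I) : Matrix X X ℂ :=
  Matrix.of fun x y => if G.Adj i x y then 1 else 0

/-- The adjacency algebra `A(Γ)`: the subalgebra of matrices generated by the
adjacency operators. -/
noncomputable def EdgeColouredGraph.adjAlgebra {I X : Type*} [Fintype X] [DecidableEq X]
    (G : EdgeColouredGraph I X) : Subalgebra ℂ (Matrix X X ℂ) :=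
  Algebra.adjoin ℂ (Set.range G.adjMatrix)

open Classical in
/-- An architecture on an edge-coloured graph: a map `δ : X × X → A(Γ)` such that
(Ar1) the set `W = {δ x y | y}` is independent of `x` and is a basis of `A(Γ)`, and
(Ar2) for `T ∈ W`, the row vector `x·T` is the sum of the vertices `y` with `δ x y = T`,
i.e. `T x z = 1` if `δ x z = T` and `0` otherwise. -/
structure Architecture {I X : Type*} [Fintype X] [DecidableEq X] (G : EdgeColouredGraph I X) where
  δ : X → X → Matrix X X ℂ
  mem_adjAlgebra : ∀ x y, δ x y ∈ G.adjAlgebra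
  range_const : ∀ x x', Set.range (δ x) = Set.range (δ x')
  indep : ∀ x, LinearIndependent ℂ ((↑) : Set.range (δ x) → Matrix X X ℂ)
  spans : ∀ x, Submodule.span ℂ (Set.range (δ x)) =
      Subalgebra.toSubmodule G.adjAlgebra
  sphere : ∀ x z : X, ∀ T ∈ Set.range (δ x), T x z = if δ x z = T then 1 else 0

section Aux

variable {I X : Type*} [Fintype X] [DecidableEq X] {G : EdgeColouredGraph I X}

omit [DecidableEq X] in
lemma adjMatrix_transpose_aux (G : EdgeColouredGraph I X) (i : I) :
    (G.adjMatrix i)ᵀ = G.adjMatrix i := by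
  classical
  ext a b
  simp only [Matrix.transpose_apply, EdgeColouredGraph.adjMatrix, Matrix.of_apply]
  by_cases h : G.Adj i a b
  · simp [h, G.symm i a b h]
  · have h' : ¬ G.Adj i b a := fun hh => h (G.symm i b a hh)
    simp [h, h']

lemma transpose_mem_aux {M : Matrix X X ℂ} (hM : M ∈ G.adjAlgebra) : Mᵀ ∈ G.adjAlgebra := by
  induction hM using Algebra.adjoin_induction with
  | mem x hx =>
      obtain ⟨i, rfl⟩ := hx
      rw [adjMatrix_transpose_aux]
      exact Algebra.subset_adjoin ⟨i, rfl⟩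
  | algebraMap r =>
      have h : (algebraMap ℂ (Matrix X X ℂ) r)ᵀ = algebraMap ℂ (Matrix X X ℂ) r := by
        simp [Matrix.algebraMap_eq_diagonal]
      rw [h]
      exact Subalgebra.algebraMap_mem _ r
  | add x y hx hy ihx ihy =>
      rw [Matrix.transpose_add]
      exact add_mem ihx ihy
  | mul x y hx hy ihx ihy =>
      rw [Matrix.transpose_mul]
      exact mul_mem ihy ihx

lemma entry_aux (A : Architecture G) (a b a' b' : X) :
    A.δ a b a' b' = if A.δ a' b' = A.δ a b then 1 else 0 := by
  have h1 : A.δ a b ∈ Set.range (A.δ a') := by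
    rw [A.range_const a' a]; exact ⟨b, rfl⟩
  exact A.sphere a' b' _ h1

lemma star_key (A : Architecture G) (a b a' b' : X) (h : A.δ a b = A.δ a' b') :
    A.δ b a = A.δ b' a' := by
  classical
  set T := A.δ b a with hTdef
  have hT : Tᵀ ∈ Submodule.span ℂ (Set.range (A.δ a)) := by
    rw [A.spans a]
    exact transpose_mem_aux (A.mem_adjAlgebra b a)
  obtain ⟨c, hsupp, hsum⟩ := Submodule.mem_span_set.mp hT
  have hc : ∀ u v : X, c (A.δ u v) = if A.δ v u = T then 1 else 0 := by
    intro u v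
    have e : (c.sum fun mi r => r • mi) u v = Tᵀ u v := by rw [hsum]
    rw [Finsupp.sum, Matrix.sum_apply] at e
    simp only [Matrix.smul_apply, smul_eq_mul] at e
    have hterm : ∀ m ∈ c.support, c m * m u v = if A.δ u v = m then c m else 0 := by
      intro m hm
      have hmW : m ∈ Set.range (A.δ u) := by
        rw [A.range_const u a]; exact hsupp hm
      rw [A.sphere u v m hmW, mul_ite, mul_one, mul_zero]
    rw [Finset.sum_congr rfl hterm, Finset.sum_ite_eq,
      Matrix.transpose_apply, hTdef, entry_aux A b a v u, ← hTdef] at e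
    have hcl : (if A.δ u v ∈ c.support then c (A.δ u v) else 0) = c (A.δ u v) := by
      split_ifs with hmem
      · rfl
      · exact (Finsupp.notMem_support_iff.mp hmem).symm
    rw [hcl] at e
    exact e
  have h1 : c (A.δ a b) = 1 := by
    rw [hc a b, if_pos rfl]
  have h2 := hc a' b'
  rw [← h, h1] at h2
  by_cases hd : A.δ b' a' = T
  · exact hd.symm
  · rw [if_neg hd] at h2
    exact absurd h2 one_ne_zero

end Aux

/-- For an architecture: `δ y x` is the transpose of `δ x y`; in particular the
Coxeter basis `W` is closed under transposition. -/
theorem stmt_8 {I X : Type*} [Fintype X] [DecidableEq X]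
    (G : EdgeColouredGraph I X) (A : Architecture G) :
    (∀ x y : X, A.δ y x = (A.δ x y)ᵀ) ∧
      (∀ x : X, ∀ T ∈ Set.range (A.δ x), Tᵀ ∈ Set.range (A.δ x)) := by
  have key : ∀ x y : X, A.δ y x = (A.δ x y)ᵀ := by
    intro x y
    ext a b
    rw [Matrix.transpose_apply, entry_aux A y x a b, entry_aux A x y b a]
    by_cases h : A.δ a b = A.δ y x
    · rw [if_pos h, if_pos (star_key A a b y x h)]
    · have h2 : ¬ (A.δ b a = A.δ x y) := fun hh => h (star_key A b a x y hh)
      rw [if_neg h, if_neg h2]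
  refine ⟨key, ?_⟩
  rintro x T ⟨y, rfl⟩
  rw [← key x y, A.range_const x y]
  exact ⟨x, rfl⟩
end

section
/- Let q be a complex number. In the Iwahori-Hecke-type algebra Aff(q) generated by T₁, T₂ with relations (T₁−(q−1))(T₁+1)=0, (T₂−q)(T₂+1)=0, (T₁T₂)² = (q−1)T₂T₁ + (q−1)T₂T₁T₂ − T₁T₂T₁, and (T₂T₁)² = (q−1)T₁T₂ + (q−1)T₂T₁T₂ − T₁T₂T₁, the seven elements 1, T₁, T₂, T₁T₂, T₂T₁, T₁T₂T₁, T₂T₁T₂ span Aff(q) as a ℂ-vector space; hence dim Aff(q) ≤ 7. -/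
/-- The defining relations of the algebra `Aff(q)`, imposed on the free algebra on two
generators `T₁ = ι 0`, `T₂ = ι 1`. -/
inductive AffRel (q : ℂ) : FreeAlgebra ℂ (Fin 2) → FreeAlgebra ℂ (Fin 2) → Prop
  | quad1 : AffRel q
      ((FreeAlgebra.ι ℂ (0 : Fin 2) - algebraMap ℂ _ (q - 1)) * (FreeAlgebra.ι ℂ (0 : Fin 2) + 1)) 0
  | quad2 : AffRel q
      ((FreeAlgebra.ι ℂ (1 : Fin 2) - algebraMap ℂ _ q) * (FreeAlgebra.ι ℂ (1 : Fin 2) + 1)) 0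
  | braid1 : AffRel q
      ((FreeAlgebra.ι ℂ (0 : Fin 2) * FreeAlgebra.ι ℂ (1 : Fin 2)) ^ 2)
      (algebraMap ℂ _ (q - 1) * (FreeAlgebra.ι ℂ (1 : Fin 2) * FreeAlgebra.ι ℂ (0 : Fin 2)) +
        algebraMap ℂ _ (q - 1) *
          (FreeAlgebra.ι ℂ (1 : Fin 2) * FreeAlgebra.ι ℂ (0 : Fin 2) * FreeAlgebra.ι ℂ (1 : Fin 2)) -
        FreeAlgebra.ι ℂ (0 : Fin 2) * FreeAlgebra.ι ℂ (1 : Fin 2) * FreeAlgebra.ι ℂ (0 : Fin 2))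
  | braid2 : AffRel q
      ((FreeAlgebra.ι ℂ (1 : Fin 2) * FreeAlgebra.ι ℂ (0 : Fin 2)) ^ 2)
      (algebraMap ℂ _ (q - 1) * (FreeAlgebra.ι ℂ (0 : Fin 2) * FreeAlgebra.ι ℂ (1 : Fin 2)) +
        algebraMap ℂ _ (q - 1) *
          (FreeAlgebra.ι ℂ (1 : Fin 2) * FreeAlgebra.ι ℂ (0 : Fin 2) * FreeAlgebra.ι ℂ (1 : Fin 2)) -
        FreeAlgebra.ι ℂ (0 : Fin 2) * FreeAlgebra.ι ℂ (1 : Fin 2) * FreeAlgebra.ι ℂ (0 : Fin 2))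

/-- The algebra `Aff(q)`: generated by `T₁, T₂` subject to `(T₁-(q-1))(T₁+1)=0`,
`(T₂-q)(T₂+1)=0`, `(T₁T₂)² = (q-1)T₂T₁ + (q-1)T₂T₁T₂ - T₁T₂T₁` and
`(T₂T₁)² = (q-1)T₁T₂ + (q-1)T₂T₁T₂ - T₁T₂T₁`. -/
abbrev Aff (q : ℂ) := RingQuot (AffRel q)

/-- The generator `T₁` of `Aff(q)`. -/
noncomputable def AffT1 (q : ℂ) : Aff q :=
  RingQuot.mkAlgHom ℂ (AffRel q) (FreeAlgebra.ι ℂ (0 : Fin 2))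

/-- The generator `T₂` of `Aff(q)`. -/
noncomputable def AffT2 (q : ℂ) : Aff q :=
  RingQuot.mkAlgHom ℂ (AffRel q) (FreeAlgebra.ι ℂ (1 : Fin 2))

/-!
`Aff(q)` is generated as an algebra by `T₁` and `T₂`, so a subspace that contains `1` and is
stable under left multiplication by `T₁` and `T₂` is everything. For the span of the seven words
this stability comes from the relations: the quadratic relations shorten `TᵢTᵢw`, and the two
braid-type relations rewrite the only other products that leave the list, `T₁T₂T₁T₂` and
`T₂T₁T₂T₁`.
-/

theorem Submodule.span_eq_top_of_mul_mem_span {R A : Type*} [CommSemiring R] [Semiring A]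
    [Algebra R A] {s t : Set A} (hs : Algebra.adjoin R s = ⊤) (ht : 1 ∈ span R t)
    (hmul : ∀ x ∈ s, ∀ y ∈ t, x * y ∈ span R t) :
    span R t = ⊤ := by
  set M := span R t
  have hgen (x : A) (hx : x ∈ s) (m : A) (hm : m ∈ M) : x * m ∈ M := by
    induction hm using span_induction with
    | mem y hy => exact hmul x hx y hy
    | zero => simp
    | add a b _ _ ha hb => rw [mul_add]; exact add_mem ha hb
    | smul c a _ ha => rw [mul_smul_comm]; exact M.smul_mem c ha
  have hall (a : A) : ∀ m ∈ M, a * m ∈ M := by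
    induction (hs ▸ Algebra.mem_top : a ∈ Algebra.adjoin R s) using Algebra.adjoin_induction with
    | mem x hx => exact hgen x hx
    | algebraMap c => intro m hm; rw [← Algebra.smul_def]; exact M.smul_mem c hm
    | add a b _ _ ha hb => intro m hm; rw [add_mul]; exact add_mem (ha m hm) (hb m hm)
    | mul a b _ _ ha hb => intro m hm; rw [mul_assoc]; exact ha _ (hb m hm)
  exact eq_top_iff.2 fun a _ ↦ by simpa using hall a 1 ht

theorem adjoin_AffT1_AffT2 (q : ℂ) : Algebra.adjoin ℂ {AffT1 q, AffT2 q} = ⊤ := by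
  have : ({AffT1 q, AffT2 q} : Set (Aff q)) =
      RingQuot.mkAlgHom ℂ (AffRel q) '' Set.range (FreeAlgebra.ι ℂ) := by
    ext; simp [Fin.exists_fin_two, AffT1, AffT2, eq_comm]
  rw [this, Algebra.adjoin_image, FreeAlgebra.adjoin_range_ι, Algebra.map_top,
    AlgHom.range_eq_top]
  exact RingQuot.mkAlgHom_surjective ℂ (AffRel q)

theorem AffT1_mul_self (q : ℂ) : AffT1 q * AffT1 q = (q - 2) • AffT1 q + (q - 1) • 1 := by
  have h := RingQuot.mkAlgHom_rel ℂ (AffRel.quad1 (q := q))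
  simp only [Algebra.algebraMap_eq_smul_one, map_mul, map_sub, map_add, map_smul, map_one,
    map_zero, ← AffT1.eq_1, sub_mul, mul_add, smul_mul_assoc, one_mul, mul_one] at h
  linear_combination (norm := module) h

theorem AffT2_mul_self (q : ℂ) : AffT2 q * AffT2 q = (q - 1) • AffT2 q + q • 1 := by
  have h := RingQuot.mkAlgHom_rel ℂ (AffRel.quad2 (q := q))
  simp only [Algebra.algebraMap_eq_smul_one, map_mul, map_sub, map_add, map_smul, map_one,
    map_zero, ← AffT2.eq_1, sub_mul, mul_add, smul_mul_assoc, one_mul, mul_one] at h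
  linear_combination (norm := module) h

theorem AffT1_mul_AffT2_mul_AffT1_mul_AffT2 (q : ℂ) :
    AffT1 q * AffT2 q * AffT1 q * AffT2 q = (q - 1) • (AffT2 q * AffT1 q) +
      (q - 1) • (AffT2 q * AffT1 q * AffT2 q) - AffT1 q * AffT2 q * AffT1 q := by
  have h := RingQuot.mkAlgHom_rel ℂ (AffRel.braid1 (q := q))
  simp only [Algebra.algebraMap_eq_smul_one, map_mul, map_sub, map_add, map_smul, map_one,
    ← AffT1.eq_1, ← AffT2.eq_1, sub_mul, smul_mul_assoc, one_mul, pow_two, ← mul_assoc] at h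
  linear_combination (norm := module) h

theorem AffT2_mul_AffT1_mul_AffT2_mul_AffT1 (q : ℂ) :
    AffT2 q * AffT1 q * AffT2 q * AffT1 q = (q - 1) • (AffT1 q * AffT2 q) +
      (q - 1) • (AffT2 q * AffT1 q * AffT2 q) - AffT1 q * AffT2 q * AffT1 q := by
  have h := RingQuot.mkAlgHom_rel ℂ (AffRel.braid2 (q := q))
  simp only [Algebra.algebraMap_eq_smul_one, map_mul, map_sub, map_add, map_smul, map_one,
    ← AffT1.eq_1, ← AffT2.eq_1, sub_mul, smul_mul_assoc, one_mul, pow_two, ← mul_assoc] at h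
  linear_combination (norm := module) h

def affWords (q : ℂ) : Set (Aff q) :=
  {1, AffT1 q, AffT2 q, AffT1 q * AffT2 q, AffT2 q * AffT1 q,
    AffT1 q * AffT2 q * AffT1 q, AffT2 q * AffT1 q * AffT2 q}

theorem AffT_mul_mem_span_affWords (q : ℂ) :
    ∀ x ∈ ({AffT1 q, AffT2 q} : Set (Aff q)), ∀ y ∈ affWords q,
      x * y ∈ Submodule.span ℂ (affWords q) := by
  rintro x (rfl | rfl) y (rfl | rfl | rfl | rfl | rfl | rfl | rfl) <;>
  simp -failIfUnchanged only [mul_one, ← mul_assoc, AffT1_mul_self, AffT2_mul_self,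
    AffT1_mul_AffT2_mul_AffT1_mul_AffT2, AffT2_mul_AffT1_mul_AffT2_mul_AffT1, add_mul,
    smul_mul_assoc, one_mul] <;>
  repeat' first | apply add_mem | apply sub_mem | apply Submodule.smul_mem
  all_goals exact Submodule.subset_span (by simp [affWords])

/-- The seven elements `1, T₁, T₂, T₁T₂, T₂T₁, T₁T₂T₁, T₂T₁T₂` span `Aff(q)` as a
ℂ-vector space; hence `dim Aff(q) ≤ 7`. -/
theorem stmt_15 (q : ℂ) :
    Submodule.span ℂ
        ({1, AffT1 q, AffT2 q, AffT1 q * AffT2 q, AffT2 q * AffT1 q,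
          AffT1 q * AffT2 q * AffT1 q, AffT2 q * AffT1 q * AffT2 q} : Set (Aff q)) = ⊤ ∧
      Module.finrank ℂ (Aff q) ≤ 7 := by
  have hspan : Submodule.span ℂ (affWords q) = ⊤ :=
    Submodule.span_eq_top_of_mul_mem_span (adjoin_AffT1_AffT2 q)
      (Submodule.subset_span (by simp [affWords])) (AffT_mul_mem_span_affWords q)
  refine ⟨hspan, finrank_le_of_span_eq_top (v := ![1, AffT1 q, AffT2 q, AffT1 q * AffT2 q,
    AffT2 q * AffT1 q, AffT1 q * AffT2 q * AffT1 q, AffT2 q * AffT1 q * AffT2 q]) ?_⟩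
  simp only [Matrix.range_cons, Matrix.range_empty, Set.union_empty, Set.singleton_union]
  exact hspan
end

section
/- Let q be a complex number. The assignment T₁ ↦ [[−1, 0],[0, q−1]] and T₂ ↦ [[q−1, q],[1, 0]] extends to a ℂ-algebra homomorphism ρ : Aff(q) → M₂(ℂ), i.e., these 2×2 matrices satisfy the four defining relations of Aff(q). Moreover, when q ≠ 0 the resulting 2-dimensional representation is irreducible (no 1-dimensional invariant subspace). -/
noncomputable section StmtAux

private def matA (q : ℂ) : Matrix (Fin 2) (Fin 2) ℂ := !![(-1 : ℂ), 0; 0, q - 1]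
private def matB (q : ℂ) : Matrix (Fin 2) (Fin 2) ℂ := !![q - 1, q; 1, 0]

private def affF (q : ℂ) : FreeAlgebra ℂ (Fin 2) →ₐ[ℂ] Matrix (Fin 2) (Fin 2) ℂ :=
  FreeAlgebra.lift ℂ ![matA q, matB q]

private lemma affF_0 (q : ℂ) : affF q (FreeAlgebra.ι ℂ (0 : Fin 2)) = matA q := by
  simp [affF, FreeAlgebra.lift_ι_apply]

private lemma affF_1 (q : ℂ) : affF q (FreeAlgebra.ι ℂ (1 : Fin 2)) = matB q := by
  simp [affF, FreeAlgebra.lift_ι_apply]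

private lemma mat_quad1 (q : ℂ) :
    (matA q - algebraMap ℂ _ (q - 1)) * (matA q + 1) = 0 := by
  ext i j
  fin_cases i <;> fin_cases j <;>
    simp [matA, Matrix.mul_apply, Fin.sum_univ_two, Matrix.algebraMap_matrix_apply,
      Matrix.one_apply] <;> ring

private lemma mat_quad2 (q : ℂ) :
    (matB q - algebraMap ℂ _ q) * (matB q + 1) = 0 := by
  ext i j
  fin_cases i <;> fin_cases j <;>
    simp [matB, Matrix.mul_apply, Fin.sum_univ_two, Matrix.algebraMap_matrix_apply,
      Matrix.one_apply] <;> ring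

private lemma mat_braid1 (q : ℂ) :
    (matA q * matB q) ^ 2 =
      algebraMap ℂ _ (q - 1) * (matB q * matA q) +
        algebraMap ℂ _ (q - 1) * (matB q * matA q * matB q) -
        matA q * matB q * matA q := by
  ext i j
  fin_cases i <;> fin_cases j <;>
    simp [pow_two, matA, matB, Matrix.mul_apply, Fin.sum_univ_two,
      Matrix.algebraMap_matrix_apply, Matrix.one_apply] <;> ring

private lemma mat_braid2 (q : ℂ) :
    (matB q * matA q) ^ 2 =
      algebraMap ℂ _ (q - 1) * (matA q * matB q) +
        algebraMap ℂ _ (q - 1) * (matB q * matA q * matB q) -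
        matA q * matB q * matA q := by
  ext i j
  fin_cases i <;> fin_cases j <;>
    simp [pow_two, matA, matB, Matrix.mul_apply, Fin.sum_univ_two,
      Matrix.algebraMap_matrix_apply, Matrix.one_apply] <;> ring

private lemma affF_rel (q : ℂ) : ∀ ⦃x y⦄, AffRel q x y → affF q x = affF q y := by
  intro x y h
  induction h with
  | quad1 =>
    simpa only [map_mul, map_sub, map_add, map_one, map_zero, AlgHom.commutes,
      affF_0] using mat_quad1 q
  | quad2 =>
    simpa only [map_mul, map_sub, map_add, map_one, map_zero, AlgHom.commutes,
      affF_1] using mat_quad2 q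
  | braid1 =>
    simpa only [map_mul, map_sub, map_add, map_pow, AlgHom.commutes,
      affF_0, affF_1] using mat_braid1 q
  | braid2 =>
    simpa only [map_mul, map_sub, map_add, map_pow, AlgHom.commutes,
      affF_0, affF_1] using mat_braid2 q

end StmtAux

/-- The matrices `[[-1,0],[0,q-1]]` and `[[q-1,q],[1,0]]` satisfy the defining relations of
`Aff(q)`, i.e. the assignment extends to an algebra homomorphism
`ρ : Aff(q) → M₂(ℂ)`; moreover when `q ≠ 0` the resulting 2-dimensional representation is
irreducible: there is no invariant subspace of dimension 1. -/
theorem stmt_17 (q : ℂ) :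
    (∃ ρ : Aff q →ₐ[ℂ] Matrix (Fin 2) (Fin 2) ℂ,
      ρ (AffT1 q) = !![(-1 : ℂ), 0; 0, q - 1] ∧
      ρ (AffT2 q) = !![q - 1, q; 1, 0]) ∧
    (q ≠ 0 → ∀ W : Submodule ℂ (Fin 2 → ℂ),
      (∀ v ∈ W, (!![(-1 : ℂ), 0; 0, q - 1]).mulVec v ∈ W) →
      (∀ v ∈ W, (!![q - 1, q; 1, (0 : ℂ)]).mulVec v ∈ W) →
      Module.finrank ℂ W ≠ 1) := by
  constructor
  · refine ⟨RingQuot.liftAlgHom ℂ ⟨affF q, affF_rel q⟩, ?_, ?_⟩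
    · rw [AffT1, RingQuot.liftAlgHom_mkAlgHom_apply, affF_0]; rfl
    · rw [AffT2, RingQuot.liftAlgHom_mkAlgHom_apply, affF_1]; rfl
  · intro hq W hAW hBW hrank
    rw [finrank_eq_one_iff'] at hrank
    obtain ⟨⟨v, hvW⟩, hv0, hgen⟩ := hrank
    have hv : v ≠ 0 := fun h => hv0 (Subtype.ext h)
    obtain ⟨a, ha⟩ := hgen ⟨_, hAW v hvW⟩
    obtain ⟨b, hb⟩ := hgen ⟨_, hBW v hvW⟩
    have ha' : (!![(-1 : ℂ), 0; 0, q - 1]).mulVec v = a • v :=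
      (congrArg Subtype.val ha).symm
    have hb' : (!![q - 1, q; 1, (0 : ℂ)]).mulVec v = b • v :=
      (congrArg Subtype.val hb).symm
    have ha0 := congrFun ha' 0
    have ha1 := congrFun ha' 1
    have hb0 := congrFun hb' 0
    have hb1 := congrFun hb' 1
    simp [Matrix.mulVec, dotProduct, Fin.sum_univ_two] at ha0 ha1 hb0 hb1
    by_cases h0 : v 0 = 0
    · have h1 : v 1 ≠ 0 := by
        intro h1
        apply hv
        funext i; fin_cases i <;> simpa [h0, h1]
      have hbz : b = 0 := by
        have h := hb1
        rw [h0] at h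
        rcases mul_eq_zero.mp h.symm with h' | h'
        · exact h'
        · exact absurd h' h1
      have hqv : q * v 1 = 0 := by
        have h := hb0
        rw [h0, hbz] at h
        linear_combination h
      rcases mul_eq_zero.mp hqv with h | h
      · exact hq h
      · exact h1 h
    · have haz : a = -1 := by
        have h : (a + 1) * v 0 = 0 := by linear_combination -ha0
        rcases mul_eq_zero.mp h with h' | h'
        · linear_combination h'
        · exact absurd h' h0
      have h1 : v 1 = 0 := by
        rcases ha1 with h | h
        · rw [haz] at h; exact absurd (by linear_combination h) hq
        · exact h
      apply h0
      rw [hb1, h1, mul_zero]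
end
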